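/- arXiv:2203.12253 — 6 statements merged into one kernel-verified Lean document; each statement's English description precedes it below -/
import Mathlib

section
/- For any PL-formula α and any pointed model (M,w): α is true at (M,w) under the classical satisfaction relation if and only if R(w,α) ≠ ∅ (truth equals resolvability). -/
/-- Formulas of the propositional language `PL` over atoms `P`. -/
inductive PLForm (P : Type) : Type
  | atom : P → PLForm P
  | bot  : PLForm P
  | and  : PLForm P → PLForm P → PLForm P
  | or   : PLForm P → PLForm P → PLForm P
  | imp  : PLForm P → PLForm P → PLForm P

/-- `¬α` abbreviates `α → ⊥`. -/
def PLForm.neg {P : Type} (α : PLForm P) : PLForm P := α.imp .bot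

/-- The resolution space `S(α)`, realized as a type: `S(p)` and `S(⊥)` are
singletons, `S(α∨β)` is the disjoint union, `S(α∧β)` the product, and
`S(α→β)` the full function space. -/
def RS (P : Type) : PLForm P → Type
  | .atom _  => Unit
  | .bot     => Unit
  | .or a b  => RS P a ⊕ RS P b
  | .and a b => RS P a × RS P b
  | .imp a b => RS P a → RS P b

/-- An epistemic (information) model over atoms `P` with worlds `W`:
`W` is nonempty and `V` a valuation. -/
structure Model (P W : Type) where
  ne : Nonempty W
  V : W → Set P

/-- The actual resolutions `R(w,α) ⊆ S(α)` at a world `w`. -/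
def Res {P W : Type} (M : Model P W) (w : W) : (α : PLForm P) → Set (RS P α)
  | .atom p  => {_u : Unit | p ∈ M.V w}
  | .bot     => ∅
  | .or a b  => (Sum.inl '' Res M w a) ∪ (Sum.inr '' Res M w b)
  | .and a b => (Res M w a) ×ˢ (Res M w b)
  | .imp a b => {f : RS P a → RS P b | f '' Res M w a ⊆ Res M w b}

/-- Formulas of the dynamic epistemic language `DELKh`. -/
inductive DForm (P : Type) : Type
  | atom : P → DForm P
  | bot  : DForm P
  | and  : DForm P → DForm P → DForm P
  | or   : DForm P → DForm P → DForm P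
  | imp  : DForm P → DForm P → DForm P
  | K    : DForm P → DForm P
  | box  : DForm P → DForm P
  | kh   : PLForm P → DForm P

def DForm.neg {P : Type} (φ : DForm P) : DForm P := φ.imp .bot
def DForm.dia {P : Type} (φ : DForm P) : DForm P := (DForm.box φ.neg).neg
def DForm.biImp {P : Type} (φ ψ : DForm P) : DForm P := (φ.imp ψ).and (ψ.imp φ)

/-- Embedding of `PL` into `DELKh`. -/
def PLForm.toD {P : Type} : PLForm P → DForm P
  | .atom p  => .atom p
  | .bot     => .bot
  | .and a b => (toD a).and (toD b)
  | .or a b  => (toD a).or (toD b)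
  | .imp a b => (toD a).imp (toD b)

/-- The submodel of `M` determined by a nonempty set `s` of worlds,
with the restricted valuation. -/
def Model.restrict {P W : Type} (M : Model P W) (s : Set W) (h : s.Nonempty) :
    Model P s :=
  { ne := ⟨⟨h.choose, h.choose_spec⟩⟩, V := fun w => M.V w.1 }

/-- Satisfaction of `DELKh`-formulas at a pointed model `(M,w)`. -/
def Sat (P : Type) : (W : Type) → Model P W → W → DForm P → Prop
  | _, M, w, .atom p  => p ∈ M.V w
  | _, _, _, .bot     => False
  | W, M, w, .and a b => Sat P W M w a ∧ Sat P W M w b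
  | W, M, w, .or a b  => Sat P W M w a ∨ Sat P W M w b
  | W, M, w, .imp a b => Sat P W M w a → Sat P W M w b
  | W, M, _, .K φ     => ∀ v : W, Sat P W M v φ
  | W, M, w, .box φ   =>
      ∀ (s : Set W) (h : w ∈ s), Sat P s (M.restrict s ⟨w, h⟩) ⟨w, h⟩ φ
  | W, M, _, .kh α    => ∃ x : RS P α, ∀ v : W, x ∈ Res M v α

/-- A `DELKh`-formula is valid if it holds at every pointed model. -/
def Valid {P : Type} (φ : DForm P) : Prop :=
  ∀ (W : Type) (M : Model P W) (w : W), Sat P W M w φ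

/-- Semantic entailment from a set of `DELKh`-formulas. -/
def EntailsSet {P : Type} (Γ : Set (DForm P)) (φ : DForm P) : Prop :=
  ∀ (W : Type) (M : Model P W) (w : W),
    (∀ ψ ∈ Γ, Sat P W M w ψ) → Sat P W M w φ

/-- Classical satisfaction of `PL`-formulas at a pointed model. -/
def PLSat {P W : Type} (M : Model P W) (w : W) : PLForm P → Prop
  | .atom p  => p ∈ M.V w
  | .bot     => False
  | .and a b => PLSat M w a ∧ PLSat M w b
  | .or a b  => PLSat M w a ∨ PLSat M w b
  | .imp a b => PLSat M w a → PLSat M w b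

/-- Inquisitive support of `PL`-formulas at a state `s` of a model `M`. -/
def Support (P W : Type) (M : Model P W) : Set W → PLForm P → Prop
  | s, .atom p  => ∀ w ∈ s, p ∈ M.V w
  | s, .bot     => s = ∅
  | s, .and a b => Support P W M s a ∧ Support P W M s b
  | s, .or a b  => Support P W M s a ∨ Support P W M s b
  | s, .imp a b => ∀ t ⊆ s, Support P W M t a → Support P W M t b

instance RS.nonempty {P : Type} : ∀ α : PLForm P, Nonempty (RS P α)
  | .atom _ => ⟨()⟩
  | .bot => ⟨()⟩
  | .or a _ => (RS.nonempty a).elim fun x => ⟨Sum.inl x⟩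
  | .and a b => (RS.nonempty a).elim fun x => (RS.nonempty b).elim fun y => ⟨(x, y)⟩
  | .imp _ b => (RS.nonempty b).elim fun y => ⟨fun _ => y⟩

theorem truth_iff_resolvable' {P W : Type} [Countable P] (M : Model P W) (w : W)
    (α : PLForm P) : PLSat M w α ↔ (Res M w α).Nonempty := by
  induction α with
  | atom p => exact ⟨fun h => ⟨(), h⟩, fun ⟨_, h⟩ => h⟩
  | bot => simp [PLSat, Res]
  | and a b iha ihb =>
    show _ ↔ (Res M w a ×ˢ Res M w b).Nonempty
    rw [Set.prod_nonempty_iff]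
    exact and_congr iha ihb
  | or a b iha ihb =>
    show _ ↔ ((Sum.inl '' Res M w a) ∪ (Sum.inr '' Res M w b)).Nonempty
    rw [Set.union_nonempty, Set.image_nonempty, Set.image_nonempty]
    exact or_congr iha ihb
  | imp a b iha ihb =>
    show _ ↔ ({f : RS P a → RS P b | f '' Res M w a ⊆ Res M w b}).Nonempty
    constructor
    · intro h
      by_cases ha : (Res M w a).Nonempty
      · obtain ⟨y, hy⟩ := ihb.mp (h (iha.mpr ha))
        refine ⟨fun _ => y, ?_⟩
        rintro z ⟨x, hx, rfl⟩
        exact hy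
      · obtain ⟨y⟩ := RS.nonempty (P := P) b
        refine ⟨fun _ => y, ?_⟩
        rintro z ⟨x, hx, rfl⟩
        exact absurd ⟨x, hx⟩ ha
    · rintro ⟨f, hf⟩ hsa
      obtain ⟨x, hx⟩ := iha.mp hsa
      exact ihb.mpr ⟨f x, hf ⟨x, hx, rfl⟩⟩

/-- truth equals resolvability: `α` is classically true at `(M,w)`
iff `R(w,α) ≠ ∅`. -/
theorem truth_iff_resolvable {P W : Type} [Countable P] (M : Model P W) (w : W)
    (α : PLForm P) : PLSat M w α ↔ Res M w α ≠ ∅ := by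
  rw [truth_iff_resolvable', Set.nonempty_iff_ne_empty]
end

section
/- For every PL-formula α, the DELKh-formula Kh α → Kα is valid (true at every pointed model). -/
def RS.default {P : Type} : (α : PLForm P) → RS P α
  | .atom _ => ()
  | .bot => ()
  | .or a _ => Sum.inl (RS.default a)
  | .and a b => (RS.default a, RS.default b)
  | .imp _ b => fun _ => RS.default b

theorem res_nonempty_iff_sat {P W : Type} (M : Model P W) (w : W) :
    ∀ α : PLForm P, (Res M w α).Nonempty ↔ Sat P W M w α.toD := by
  intro α
  induction α with
  | atom p =>
    constructor
    · rintro ⟨x, hx⟩; exact hx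
    · intro h; exact ⟨(), h⟩
  | bot =>
    constructor
    · rintro ⟨x, hx⟩; exact hx
    · intro h; exact h.elim
  | and a b iha ihb =>
    constructor
    · rintro ⟨⟨x, y⟩, hx, hy⟩
      exact ⟨iha.mp ⟨x, hx⟩, ihb.mp ⟨y, hy⟩⟩
    · rintro ⟨ha, hb⟩
      obtain ⟨x, hx⟩ := iha.mpr ha
      obtain ⟨y, hy⟩ := ihb.mpr hb
      exact ⟨⟨x, y⟩, hx, hy⟩
  | or a b iha ihb =>
    constructor
    · rintro ⟨x, hx⟩
      rcases hx with ⟨y, hy, rfl⟩ | ⟨y, hy, rfl⟩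
      · exact Or.inl (iha.mp ⟨y, hy⟩)
      · exact Or.inr (ihb.mp ⟨y, hy⟩)
    · rintro (h | h)
      · obtain ⟨x, hx⟩ := iha.mpr h
        exact ⟨Sum.inl x, Or.inl ⟨x, hx, rfl⟩⟩
      · obtain ⟨x, hx⟩ := ihb.mpr h
        exact ⟨Sum.inr x, Or.inr ⟨x, hx, rfl⟩⟩
  | imp a b iha ihb =>
    constructor
    · rintro ⟨f, hf⟩ ha
      obtain ⟨x, hx⟩ := iha.mpr ha
      exact ihb.mp ⟨f x, hf ⟨x, hx, rfl⟩⟩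
    · intro h
      by_cases ha : Sat P W M w a.toD
      · obtain ⟨y, hy⟩ := ihb.mpr (h ha)
        refine ⟨fun _ => y, ?_⟩
        rintro z ⟨x, hx, rfl⟩; exact hy
      · refine ⟨fun _ => RS.default b, ?_⟩
        rintro z ⟨x, hx, rfl⟩
        exact absurd (iha.mp ⟨x, hx⟩) ha

/-- `Kh α → K α` is valid for every `PL`-formula `α`. -/
theorem kh_implies_K_valid {P : Type} [Countable P] (α : PLForm P) :
    Valid ((DForm.kh α).imp (DForm.K α.toD)) := by
  intro W M w h
  obtain ⟨x, hx⟩ := h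
  intro v
  exact (res_nonempty_iff_sat M v α).mp ⟨x, hx v⟩
end

section
/- The following DELKh-formulas and schemata are valid for all PL-formulas α, β: (i) Kh ⊥ ↔ ⊥; (ii) Kh(α∨β) ↔ (Kh α ∨ Kh β); (iii) Kh(α∧β) ↔ (Kh α ∧ Kh β); (iv) Kh(α→β) ↔ K□(Kh α → Kh β). -/
/-! The first three schemata hold because `Res` turns `⊥`, `∨`, `∧` into `∅`, disjoint union
and product, so a resolution common to all worlds decomposes componentwise.

For `→`, both sides say: for every `x ∈ S(α)` there is `y ∈ S(β)` that resolves `β` wherever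
`x` resolves `α`. On the left such `y` is `f x` for the common resolution `f`; conversely the
`y`'s assemble into `f` by choice. On the right, `Kh α` in a submodel `s` means some `x`
resolves `α` throughout `s`, and the largest such `s` is `{v | x ∈ R(v,α)}`. -/

instance RS.instNonempty {P : Type} : ∀ α : PLForm P, Nonempty (RS P α)
  | .atom _ => ⟨()⟩
  | .bot => ⟨()⟩
  | .or a _ => (RS.instNonempty a).map Sum.inl
  | .and a b => (RS.instNonempty a).elim fun x => (RS.instNonempty b).map (x, ·)
  | .imp _ b => (RS.instNonempty b).map fun y _ => y

section Semantics

variable {P W : Type}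

theorem res_restrict (M : Model P W) (s : Set W) (h : s.Nonempty) (v : s) :
    ∀ α : PLForm P, Res (M.restrict s h) v α = Res M v.1 α
  | .atom _ => rfl
  | .bot => rfl
  | .or a b => by unfold Res; rw [res_restrict M s h v a, res_restrict M s h v b]
  | .and a b => by unfold Res; rw [res_restrict M s h v a, res_restrict M s h v b]
  | .imp a b => by unfold Res; rw [res_restrict M s h v a, res_restrict M s h v b]

theorem sat_kh_restrict_iff (M : Model P W) (s : Set W) (h : s.Nonempty) (u : s)
    (α : PLForm P) :
    Sat P s (M.restrict s h) u (.kh α) ↔ ∃ x : RS P α, ∀ v ∈ s, x ∈ Res M v α := by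
  simp only [Sat, res_restrict, Subtype.forall]

theorem not_sat_kh_bot (M : Model P W) (w : W) : ¬ Sat P W M w (.kh .bot) := by
  rintro ⟨x, hx⟩
  obtain ⟨v⟩ := M.ne
  exact hx v

theorem sat_kh_or_iff (M : Model P W) (w : W) (α β : PLForm P) :
    Sat P W M w (.kh (α.or β)) ↔ Sat P W M w (.kh α) ∨ Sat P W M w (.kh β) := by
  constructor
  · rintro ⟨x | x, hx⟩
    · refine Or.inl ⟨x, fun v => ?_⟩
      obtain ⟨_, hz, ⟨⟩⟩ | ⟨_, -, ⟨⟩⟩ := hx v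
      exact hz
    · refine Or.inr ⟨x, fun v => ?_⟩
      obtain ⟨_, -, ⟨⟩⟩ | ⟨_, hz, ⟨⟩⟩ := hx v
      exact hz
  · rintro (⟨x, hx⟩ | ⟨x, hx⟩)
    · exact ⟨.inl x, fun v => Or.inl ⟨x, hx v, rfl⟩⟩
    · exact ⟨.inr x, fun v => Or.inr ⟨x, hx v, rfl⟩⟩

theorem sat_kh_and_iff (M : Model P W) (w : W) (α β : PLForm P) :
    Sat P W M w (.kh (α.and β)) ↔ Sat P W M w (.kh α) ∧ Sat P W M w (.kh β) := by
  constructor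
  · rintro ⟨⟨x, y⟩, hxy⟩
    exact ⟨⟨x, fun v => (hxy v).1⟩, ⟨y, fun v => (hxy v).2⟩⟩
  · rintro ⟨⟨x, hx⟩, ⟨y, hy⟩⟩
    exact ⟨(x, y), fun v => ⟨hx v, hy v⟩⟩

theorem sat_kh_imp_iff (M : Model P W) (w : W) (α β : PLForm P) :
    Sat P W M w (.kh (α.imp β)) ↔
      ∀ x : RS P α, ∃ y : RS P β, ∀ v, x ∈ Res M v α → y ∈ Res M v β := by
  simp only [Sat, Res, Set.image_subset_iff]
  constructor
  · rintro ⟨f, hf⟩ x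
    exact ⟨f x, fun v hx => hf v hx⟩
  · intro h
    choose f hf using h
    exact ⟨f, fun v x hx => hf x v hx⟩

theorem sat_K_box_kh_imp_iff (M : Model P W) (w : W) (α β : PLForm P) :
    Sat P W M w (.K (.box ((DForm.kh α).imp (.kh β)))) ↔
      ∀ x : RS P α, ∃ y : RS P β, ∀ v, x ∈ Res M v α → y ∈ Res M v β := by
  constructor
  · intro h x
    by_cases hx : ∃ v, x ∈ Res M v α
    · obtain ⟨v, hv⟩ := hx
      have hα := (sat_kh_restrict_iff M {u | x ∈ Res M u α} ⟨v, hv⟩ ⟨v, hv⟩ α).mpr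
        ⟨x, fun _ hu => hu⟩
      exact (sat_kh_restrict_iff M _ _ _ β).mp (h v _ hv hα)
    · exact ⟨Classical.arbitrary _, fun v hv => (hx ⟨v, hv⟩).elim⟩
  · intro h v s hvs hα
    obtain ⟨x, hx⟩ := (sat_kh_restrict_iff M s ⟨v, hvs⟩ _ α).mp hα
    obtain ⟨y, hy⟩ := h x
    exact (sat_kh_restrict_iff M s _ _ β).mpr ⟨y, fun u hu => hy u (hx u hu)⟩

end Semantics

theorem valid_biImp_of_iff {P : Type} {φ ψ : DForm P}
    (h : ∀ (W : Type) (M : Model P W) (w : W), Sat P W M w φ ↔ Sat P W M w ψ) :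
    Valid (φ.biImp ψ) :=
  fun W M w => ⟨(h W M w).mp, (h W M w).mpr⟩

theorem kh_reduction_valid_general {P : Type} :
    Valid ((DForm.kh (P := P) .bot).biImp .bot) ∧
    (∀ α β : PLForm P,
      Valid ((DForm.kh (α.or β)).biImp ((DForm.kh α).or (DForm.kh β)))) ∧
    (∀ α β : PLForm P,
      Valid ((DForm.kh (α.and β)).biImp ((DForm.kh α).and (DForm.kh β)))) ∧
    (∀ α β : PLForm P,
      Valid ((DForm.kh (α.imp β)).biImp
        (DForm.K (DForm.box ((DForm.kh α).imp (DForm.kh β)))))) :=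
  ⟨valid_biImp_of_iff fun _ M w => iff_false_intro (not_sat_kh_bot M w),
    fun α β => valid_biImp_of_iff fun _ M w => sat_kh_or_iff M w α β,
    fun α β => valid_biImp_of_iff fun _ M w => sat_kh_and_iff M w α β,
    fun α β => valid_biImp_of_iff fun _ M w =>
      (sat_kh_imp_iff M w α β).trans (sat_K_box_kh_imp_iff M w α β).symm⟩

/-- the reduction schemata for `Kh` are valid:
`Kh ⊥ ↔ ⊥`, `Kh(α∨β) ↔ Kh α ∨ Kh β`, `Kh(α∧β) ↔ Kh α ∧ Kh β`, and
`Kh(α→β) ↔ K□(Kh α → Kh β)`. -/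
theorem kh_reduction_valid {P : Type} [Countable P] :
    Valid ((DForm.kh (P := P) .bot).biImp .bot) ∧
    (∀ α β : PLForm P,
      Valid ((DForm.kh (α.or β)).biImp ((DForm.kh α).or (DForm.kh β)))) ∧
    (∀ α β : PLForm P,
      Valid ((DForm.kh (α.and β)).biImp ((DForm.kh α).and (DForm.kh β)))) ∧
    (∀ α β : PLForm P,
      Valid ((DForm.kh (α.imp β)).biImp
        (DForm.K (DForm.box ((DForm.kh α).imp (DForm.kh β)))))) :=
  kh_reduction_valid_general
end

section
/- Disjunction property: for any PL-formulas α, β, the formula Kh(α ∨ β) is valid if and only if Kh α is valid or Kh β is valid. -/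
/-!
A resolution of `α ∨ β` is tagged with the disjunct it resolves, so a single resolution of `α ∨ β`
valid at every world of a model is a uniform resolution of `α` or of `β` there. Since `Kh` only
quantifies over the worlds, it is preserved when a model is embedded into a larger one; hence
countermodels to `Kh α` and to `Kh β` placed side by side give a countermodel to `Kh (α ∨ β)`.
-/

section

variable {P : Type}

def Model.sum {W₁ W₂ : Type} (M₁ : Model P W₁) (M₂ : Model P W₂) : Model P (W₁ ⊕ W₂) where
  ne := M₁.ne.map Sum.inl
  V := Sum.elim M₁.V M₂.V

theorem res_eq_of_valuation_eq {W W' : Type} (M : Model P W) (M' : Model P W') {w : W} {w' : W'}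
    (h : M.V w = M'.V w') (α : PLForm P) : Res M w α = Res M' w' α := by
  induction α with
  | atom p => simp only [Res, h]
  | bot => rfl
  | and a b iha ihb => rw [Res, Res, iha, ihb]
  | or a b iha ihb => simp only [Res, iha, ihb]
  | imp a b iha ihb => simp only [Res, iha, ihb]

theorem sat_kh_of_map {W W' : Type} (M : Model P W) (M' : Model P W') (f : W' → W)
    (hf : ∀ v, M'.V v = M.V (f v)) {α : PLForm P} {w : W} (h : Sat P W M w (.kh α)) (w' : W') :
    Sat P W' M' w' (.kh α) := by
  obtain ⟨x, hx⟩ := h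
  exact ⟨x, fun v => res_eq_of_valuation_eq M' M (hf v) α ▸ hx (f v)⟩

theorem inl_mem_res_or {W : Type} (M : Model P W) (w : W) {α β : PLForm P} (x : RS P α) :
    (Sum.inl x : RS P (α.or β)) ∈ Res M w (α.or β) ↔ x ∈ Res M w α :=
  (Set.mem_union _ _ _).trans <|
    (or_iff_left (by rintro ⟨_, _, h⟩; cases h)).trans Sum.inl_injective.mem_set_image

theorem inr_mem_res_or {W : Type} (M : Model P W) (w : W) {α β : PLForm P} (y : RS P β) :
    (Sum.inr y : RS P (α.or β)) ∈ Res M w (α.or β) ↔ y ∈ Res M w β :=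
  (Set.mem_union _ _ _).trans <|
    (or_iff_right (by rintro ⟨_, _, h⟩; cases h)).trans Sum.inr_injective.mem_set_image

theorem sat_kh_or {W : Type} (M : Model P W) (w : W) (α β : PLForm P) :
    Sat P W M w (.kh (α.or β)) ↔ Sat P W M w (.kh α) ∨ Sat P W M w (.kh β) :=
  Sum.exists.trans <| or_congr
    (exists_congr fun x => forall_congr' fun v => inl_mem_res_or M v x)
    (exists_congr fun y => forall_congr' fun v => inr_mem_res_or M v y)

end

theorem kh_disjunction_property_general {P : Type} (α β : PLForm P) :
    Valid (DForm.kh (α.or β)) ↔ (Valid (DForm.kh α) ∨ Valid (DForm.kh β)) := by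
  refine ⟨fun h => ?_, ?_⟩
  · contrapose! h
    simp only [Valid, not_forall] at h ⊢
    obtain ⟨⟨W₁, M₁, w₁, h₁⟩, W₂, M₂, w₂, h₂⟩ := h
    refine ⟨W₁ ⊕ W₂, M₁.sum M₂, .inl w₁, fun hor => ?_⟩
    rcases (sat_kh_or _ _ α β).1 hor with hα | hβ
    · exact h₁ (sat_kh_of_map _ M₁ Sum.inl (fun _ => rfl) hα w₁)
    · exact h₂ (sat_kh_of_map _ M₂ Sum.inr (fun _ => rfl) hβ w₂)
  · rintro h W M w
    exact (sat_kh_or M w α β).2 (h.imp (· W M w) (· W M w))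

/-- disjunction property: `Kh(α∨β)` is valid iff
`Kh α` is valid or `Kh β` is valid. -/
theorem kh_disjunction_property {P : Type} [Countable P] (α β : PLForm P) :
    Valid (DForm.kh (α.or β)) ↔ (Valid (DForm.kh α) ∨ Valid (DForm.kh β)) :=
  kh_disjunction_property_general α β
end

section
/- The following DELKh-formulas are valid: (i) Kh(¬¬p → p) for all atoms p ∈ P; (ii) Kh(((p→q)→p)→p) for all atoms p, q ∈ P; (iii) Kh((¬α → β∨γ) → ((¬α→β) ∨ (¬α→γ))) for all PL-formulas α, β, γ (the Kreisel–Putnam schema); (iv) Kh((¬α → ⋁_{1≤i≤k} ¬β_i) → ⋁_{1≤i≤k}(¬α → ¬β_i)) for all k ∈ ℕ and PL-formulas α, β_1, …, β_k. -/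
/-- The disjunction of the members of a (nonempty) finite list of formulas. -/
def bigOr {P : Type} : List (PLForm P) → PLForm P
  | []        => PLForm.bot
  | [a]       => a
  | a :: rest => a.or (bigOr rest)

/-!
Each schema is witnessed by one resolution that works at every world of every model. At an
atom, `R(w,p)` is either all of `S(p)` or empty, so the constant map resolves `¬¬p → p` and
Peirce's law. The space `S(¬α)` is a singleton whose point resolves `¬α` exactly when `α` has no
resolution; hence a resolution `g` of `¬α → β ∨ γ` commits, at that point, to a disjunct, and
this choice does not depend on the world. This gives Kreisel–Putnam, and iterating it along the
disjuncts gives `ND_k`.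
-/

namespace PLForm

variable {P W : Type} {M : Model P W} {v : W}

instance uniqueRSNeg (α : PLForm P) : Unique (RS P α.neg) :=
  inferInstanceAs (Unique (RS P α → Unit))

theorem mem_res_imp {α β : PLForm P} {f : RS P (α.imp β)} :
    f ∈ Res M v (α.imp β) ↔ Set.MapsTo f (Res M v α) (Res M v β) :=
  Set.mapsTo_iff_image_subset.symm

theorem inl_mem_res_or {α β : PLForm P} {x : RS P α} :
    (Sum.inl x : RS P (α.or β)) ∈ Res M v (α.or β) ↔ x ∈ Res M v α := by
  refine ⟨?_, fun hx => Or.inl ⟨x, hx, rfl⟩⟩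
  rintro (⟨x', hx', hx'x⟩ | ⟨_, _, h⟩)
  · exact Sum.inl_injective hx'x ▸ hx'
  · cases h

theorem inr_mem_res_or {α β : PLForm P} {y : RS P β} :
    (Sum.inr y : RS P (α.or β)) ∈ Res M v (α.or β) ↔ y ∈ Res M v β := by
  refine ⟨?_, fun hy => Or.inr ⟨y, hy, rfl⟩⟩
  rintro (⟨_, _, h⟩ | ⟨y', hy', hy'y⟩)
  · cases h
  · exact Sum.inr_injective hy'y ▸ hy'

theorem mem_res_neg {α : PLForm P} {f : RS P α.neg} : f ∈ Res M v α.neg ↔ Res M v α = ∅ := by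
  rw [Set.eq_empty_iff_forall_notMem]
  exact mem_res_imp.trans ⟨fun hf x hx => hf hx, fun h x hx => h x hx⟩

theorem res_neg_eq_empty {α : PLForm P} : Res M v α.neg = ∅ ↔ (Res M v α).Nonempty := by
  simp [Set.eq_empty_iff_forall_notMem, mem_res_neg, Set.nonempty_iff_ne_empty]

theorem mem_res_neg_imp {α β : PLForm P} {f : RS P (α.neg.imp β)} :
    f ∈ Res M v (α.neg.imp β) ↔ (Res M v α = ∅ → f default ∈ Res M v β) := by
  rw [mem_res_imp]
  refine ⟨fun hf hα => hf (mem_res_neg.mpr hα), fun hf x hx => ?_⟩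
  rw [Subsingleton.elim x default] at hx ⊢
  exact hf (mem_res_neg.mp hx)

theorem mapsTo_sumMap_res_or {α β γ δ : PLForm P} {f : RS P α → RS P γ} {g : RS P β → RS P δ}
    (hf : Set.MapsTo f (Res M v α) (Res M v γ)) (hg : Set.MapsTo g (Res M v β) (Res M v δ)) :
    Set.MapsTo (Sum.map f g : RS P (α.or β) → RS P (γ.or δ)) (Res M v (α.or β))
      (Res M v (γ.or δ)) := by
  rintro _ (⟨x, hx, rfl⟩ | ⟨y, hy, rfl⟩)
  · exact Or.inl ⟨f x, hf hx, rfl⟩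
  · exact Or.inr ⟨g y, hg hy, rfl⟩

end PLForm

open PLForm

section UniformResolution

variable {P : Type}

def IsUniformResolution (α : PLForm P) (x : RS P α) : Prop :=
  ∀ (W : Type) (M : Model P W) (v : W), x ∈ Res M v α

theorem IsUniformResolution.valid_kh {α : PLForm P} {x : RS P α}
    (hx : IsUniformResolution α x) : Valid (DForm.kh α) :=
  fun W M _ => ⟨x, hx W M⟩

theorem isUniformResolution_dne_atom (p : P) :
    IsUniformResolution ((atom p).neg.neg.imp (atom p)) fun _ => () := by
  refine fun W M v => mem_res_imp.mpr fun y hy => ?_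
  obtain ⟨x, hx⟩ := res_neg_eq_empty.mp (mem_res_neg.mp hy)
  exact hx

theorem isUniformResolution_peirce_atom (p q : P) :
    IsUniformResolution ((((atom p).imp (atom q)).imp (atom p)).imp (atom p)) fun _ => () := by
  refine fun W M v => mem_res_imp.mpr fun y hy => ?_
  by_contra hp
  exact hp (mem_res_imp.mp hy (x := id) (mem_res_imp.mpr fun _ hx => absurd hx hp))

def kreiselPutnamRes (α β γ : PLForm P) :
    RS P ((α.neg.imp (β.or γ)).imp ((α.neg.imp β).or (α.neg.imp γ))) :=
  fun g => Sum.map (fun x _ => x) (fun y _ => y) (g default)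

theorem isUniformResolution_kreiselPutnamRes (α β γ : PLForm P) :
    IsUniformResolution _ (kreiselPutnamRes α β γ) := by
  refine fun W M v => mem_res_imp.mpr fun g hg => ?_
  rw [mem_res_neg_imp] at hg
  change Sum.map _ _ (g default) ∈ _
  cases h : g default with
  | inl x =>
    rw [h] at hg
    exact inl_mem_res_or.mpr (mem_res_neg_imp.mpr fun hα => inl_mem_res_or.mp (hg hα))
  | inr y =>
    rw [h] at hg
    exact inr_mem_res_or.mpr (mem_res_neg_imp.mpr fun hα => inr_mem_res_or.mp (hg hα))

theorem exists_isUniformResolution_negImp_bigOr (α β : PLForm P) (l : List (PLForm P)) :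
    ∃ F, IsUniformResolution
      ((α.neg.imp (bigOr (β :: l))).imp (bigOr ((β :: l).map α.neg.imp))) F := by
  induction l generalizing β with
  | nil => exact ⟨id, fun W M v => mem_res_imp.mpr (Set.mapsTo_id _)⟩
  | cons γ l ih =>
    obtain ⟨G, hG⟩ := ih γ
    refine ⟨Sum.map id G ∘ kreiselPutnamRes α β (bigOr (γ :: l)), fun W M v => ?_⟩
    exact mem_res_imp.mpr <|
      (mapsTo_sumMap_res_or (Set.mapsTo_id _) (mem_res_imp.mp (hG W M v))).comp
        (mem_res_imp.mp (isUniformResolution_kreiselPutnamRes α β _ W M v))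

end UniformResolution

theorem kh_axiom_schemata_valid_general {P : Type} :
    (∀ p : P, Valid (DForm.kh ((PLForm.atom p).neg.neg.imp (.atom p)))) ∧
    (∀ p q : P, Valid (DForm.kh
      ((((PLForm.atom p).imp (.atom q)).imp (.atom p)).imp (.atom p)))) ∧
    (∀ α β γ : PLForm P, Valid (DForm.kh
      ((α.neg.imp (β.or γ)).imp ((α.neg.imp β).or (α.neg.imp γ))))) ∧
    (∀ (k : ℕ) (α : PLForm P) (β : Fin (k + 1) → PLForm P), Valid (DForm.kh
      ((α.neg.imp (bigOr (List.ofFn fun i => (β i).neg))).imp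
        (bigOr (List.ofFn fun i => α.neg.imp (β i).neg))))) := by
  refine ⟨fun p => (isUniformResolution_dne_atom p).valid_kh,
    fun p q => (isUniformResolution_peirce_atom p q).valid_kh,
    fun α β γ => (isUniformResolution_kreiselPutnamRes α β γ).valid_kh, fun k α β => ?_⟩
  have hmap : (List.ofFn fun i => α.neg.imp (β i).neg) =
      (List.ofFn fun i => (β i).neg).map α.neg.imp :=
    (List.map_ofFn (f := fun i => (β i).neg) (g := α.neg.imp)).symm
  rw [hmap, List.ofFn_succ]
  obtain ⟨F, hF⟩ := exists_isUniformResolution_negImp_bigOr α (β 0).neg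
    (List.ofFn fun i => (β i.succ).neg)
  exact hF.valid_kh

/-- validity of (i) `Kh(¬¬p → p)`; (ii) Peirce's law for atoms
`Kh(((p→q)→p)→p)`; (iii) the Kreisel–Putnam schema
`Kh((¬α → β∨γ) → ((¬α→β) ∨ (¬α→γ)))`; and (iv) the schema `ND_k`
`Kh((¬α → ⋁ᵢ ¬βᵢ) → ⋁ᵢ(¬α → ¬βᵢ))` for any `k ∈ ℕ` formulas `β₁,…,β_{k+1}`. -/
theorem kh_axiom_schemata_valid {P : Type} [Countable P] :
    (∀ p : P, Valid (DForm.kh ((PLForm.atom p).neg.neg.imp (.atom p)))) ∧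
    (∀ p q : P, Valid (DForm.kh
      ((((PLForm.atom p).imp (.atom q)).imp (.atom p)).imp (.atom p)))) ∧
    (∀ α β γ : PLForm P, Valid (DForm.kh
      ((α.neg.imp (β.or γ)).imp ((α.neg.imp β).or (α.neg.imp γ))))) ∧
    (∀ (k : ℕ) (α : PLForm P) (β : Fin (k + 1) → PLForm P), Valid (DForm.kh
      ((α.neg.imp (bigOr (List.ofFn fun i => (β i).neg))).imp
        (bigOr (List.ofFn fun i => α.neg.imp (β i).neg))))) :=
  kh_axiom_schemata_valid_general
end

section
/- For any PL-formula α and any pointed model (M,w): M,w ⊨ Kh α iff M ⊨ Kh α iff M, W_M ⊩ α, i.e., the know-how formula Kh α holds at some (equivalently every) world of M exactly when α is supported by the trivial state W_M of M under inquisitive support semantics. -/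
theorem support_iff_res {P W : Type} (M : Model P W) (α : PLForm P) (s : Set W) :
    Support P W M s α ↔ ∃ x : RS P α, ∀ v ∈ s, x ∈ Res M v α := by
  induction α generalizing s with
  | atom p =>
    constructor
    · intro h; exact ⟨(), h⟩
    · rintro ⟨x, h⟩; exact h
  | bot =>
    constructor
    · rintro rfl; exact ⟨(), by simp⟩
    · rintro ⟨x, h⟩
      ext v; simp only [Set.mem_empty_iff_false, iff_false]
      intro hv; exact h v hv
  | and a b iha ihb =>
    constructor
    · rintro ⟨ha, hb⟩
      obtain ⟨x, hx⟩ := (iha s).mp ha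
      obtain ⟨y, hy⟩ := (ihb s).mp hb
      exact ⟨⟨x, y⟩, fun v hv => ⟨hx v hv, hy v hv⟩⟩
    · rintro ⟨⟨x, y⟩, h⟩
      exact ⟨(iha s).mpr ⟨x, fun v hv => (h v hv).1⟩,
             (ihb s).mpr ⟨y, fun v hv => (h v hv).2⟩⟩
  | or a b iha ihb =>
    constructor
    · rintro (ha | hb)
      · obtain ⟨x, hx⟩ := (iha s).mp ha
        exact ⟨Sum.inl x, fun v hv => Or.inl ⟨x, hx v hv, rfl⟩⟩
      · obtain ⟨y, hy⟩ := (ihb s).mp hb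
        exact ⟨Sum.inr y, fun v hv => Or.inr ⟨y, hy v hv, rfl⟩⟩
    · rintro ⟨x | y, h⟩
      · refine Or.inl ((iha s).mpr ⟨x, fun v hv => ?_⟩)
        rcases h v hv with ⟨z, hz, hez⟩ | ⟨z, _, hez⟩
        · cases hez; exact hz
        · cases hez
      · refine Or.inr ((ihb s).mpr ⟨y, fun v hv => ?_⟩)
        rcases h v hv with ⟨z, _, hez⟩ | ⟨z, hz, hez⟩
        · cases hez
        · cases hez; exact hz
  | imp a b iha ihb =>
    constructor
    · intro h
      have key : ∀ x : RS P a, ∃ y : RS P b,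
          ∀ v ∈ s, x ∈ Res M v a → y ∈ Res M v b := by
        intro x
        have hs : Support P W M {v ∈ s | x ∈ Res M v a} a :=
          (iha _).mpr ⟨x, fun v hv => hv.2⟩
        have hb := h _ (fun v hv => hv.1) hs
        obtain ⟨y, hy⟩ := (ihb _).mp hb
        exact ⟨y, fun v hv hx => hy v ⟨hv, hx⟩⟩
      choose f hf using key
      refine ⟨f, fun v hv => ?_⟩
      rintro y ⟨x, hx, rfl⟩
      exact hf x v hv hx
    · rintro ⟨f, hf⟩ t hts ha
      obtain ⟨x, hx⟩ := (iha t).mp ha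
      refine (ihb t).mpr ⟨f x, fun v hv => ?_⟩
      exact hf v (hts hv) ⟨x, hx v hv, rfl⟩

/-- `M,w ⊨ Kh α` iff `M ⊨ Kh α` iff `M, W_M ⊩ α`. -/
theorem kh_iff_support_trivial_state {P W : Type} [Countable P]
    (M : Model P W) (w : W) (α : PLForm P) :
    (Sat P W M w (.kh α) ↔ ∀ v : W, Sat P W M v (.kh α)) ∧
    ((∀ v : W, Sat P W M v (.kh α)) ↔ Support P W M Set.univ α) := by
  refine ⟨⟨fun h _ => h, fun h => h w⟩, ?_⟩
  rw [support_iff_res]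
  constructor
  · intro h
    obtain ⟨x, hx⟩ := h w
    exact ⟨x, fun v _ => hx v⟩
  · rintro ⟨x, hx⟩ v
    exact ⟨x, fun u => hx u trivial⟩
end
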